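/- Let (q, p) be feasible for Problem (P), let i ∈ {1,…,K} satisfy Π(i) ≠ 0 and q_i > 0, and let j < i satisfy Π(j) ≠ 0 and h_j > h_i. Define q̂ by q̂_j := q_j + q_i, q̂_i := 0, and q̂_k := q_k for all other k; define p̂ by p̂_{i,n} := p_{i,n} + ζ·(h_j − h_i)·q_i/N for every n ∈ N_i^I, and p̂_{k,n} := p_{k,n} for all k ≠ i. Then (q̂, p̂) is feasible for Problem (P) and R(p̂) > R(p). -/
import Mathlib


noncomputable section

/-- The information sub-channel set `N_k^I = {0,…,N} \ {Π(k)}`. -/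
def NI (N : ℕ) (Pi : ℕ → ℕ) (k : ℕ) : Finset ℕ := Finset.Icc 0 N \ {Pi k}

/-- Feasibility for Problem (P) with a single WET sub-channel `Π(k)` per slot. -/
def FeasibleP (K N : ℕ) (h : ℕ → ℕ → ℝ) (Q ζ B1 : ℝ) (Pi : ℕ → ℕ)
    (q : ℕ → ℝ) (p : ℕ → ℕ → ℝ) : Prop :=
  (∀ k ∈ Finset.Icc 1 K, 0 ≤ q k) ∧
  (∀ k ∈ Finset.Icc 1 K, Pi k = 0 → q k = 0) ∧
  (∀ k ∈ Finset.Icc 1 K, ∀ n ∈ NI N Pi k, 0 ≤ p k n) ∧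
  (∑ k ∈ Finset.Icc 1 K, q k ≤ (K : ℝ) * Q) ∧
  (∀ i ∈ Finset.Icc 1 K,
    ∑ k ∈ Finset.Icc 1 i, ∑ n ∈ NI N Pi k, p k n ≤
      ζ * ∑ k ∈ Finset.Icc 1 (i - 1), h k (Pi k) * q k + B1)

/-- Achievable rate for Problem (P). -/
def RateP (K N : ℕ) (g : ℕ → ℕ → ℝ) (Γσ : ℝ) (Pi : ℕ → ℕ) (p : ℕ → ℕ → ℝ) : ℝ :=
  (1 / ((K : ℝ) * N)) * ∑ k ∈ Finset.Icc 1 K, ∑ n ∈ NI N Pi k,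
    Real.logb 2 (1 + g k n * p k n / Γσ)

open Classical in
/-- The set `D` of causally dominating slots. -/
def Dset (K : ℕ) (h : ℕ → ℕ → ℝ) (Pi : ℕ → ℕ) : Finset ℕ :=
  (Finset.Icc 1 (K - 1)).filter
    (fun k => Pi k ≠ 0 ∧ ∀ j, 1 ≤ j → j < k → h j (Pi j) < h k (Pi k))

end

private lemma sum_upd {s : Finset ℕ} {f f' : ℕ → ℝ} {a : ℕ} (ha : a ∈ s)
    (hc : ∀ k ∈ s, k ≠ a → f' k = f k) :
    ∑ k ∈ s, f' k = ∑ k ∈ s, f k + (f' a - f a) := by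
  rw [← Finset.add_sum_erase s f' ha, ← Finset.add_sum_erase s f ha]
  have he : ∑ k ∈ s.erase a, f' k = ∑ k ∈ s.erase a, f k :=
    Finset.sum_congr rfl fun k hk =>
      hc k (Finset.mem_of_mem_erase hk) (Finset.ne_of_mem_erase hk)
  rw [he]; ring

private lemma sum_upd2 {s : Finset ℕ} {f f' : ℕ → ℝ} {a b : ℕ} (ha : a ∈ s) (hb : b ∈ s)
    (hab : a ≠ b) (hc : ∀ k ∈ s, k ≠ a → k ≠ b → f' k = f k) :
    ∑ k ∈ s, f' k = ∑ k ∈ s, f k + (f' a - f a) + (f' b - f b) := by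
  rw [← Finset.add_sum_erase s f' ha, ← Finset.add_sum_erase s f ha]
  have hb' : b ∈ s.erase a := Finset.mem_erase.mpr ⟨Ne.symm hab, hb⟩
  rw [sum_upd hb' (fun k hk hkb =>
    hc k (Finset.mem_of_mem_erase hk) (Finset.ne_of_mem_erase hk) hkb)]
  ring

theorem stmt1
    (K N : ℕ) (hK : 2 ≤ K) (hN : 2 ≤ N)
    (h g : ℕ → ℕ → ℝ)
    (hpos : ∀ k ∈ Finset.Icc 1 K, ∀ n ∈ Finset.Icc 1 N, 0 < h k n ∧ 0 < g k n)
    (hzero : ∀ k, h k 0 = 0 ∧ g k 0 = 0)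
    (Q ζ B1 Γσ : ℝ) (hQ : 0 < Q) (hζ : 0 < ζ) (hB1 : 0 ≤ B1) (hΓσ : 0 < Γσ)
    (Pi : ℕ → ℕ) (hPiK : Pi K = 0) (hPiR : ∀ k ∈ Finset.Icc 1 K, Pi k ≤ N)
    (q : ℕ → ℝ) (p : ℕ → ℕ → ℝ)
    (hfeas : FeasibleP K N h Q ζ B1 Pi q p)
    (i j : ℕ) (hi : i ∈ Finset.Icc 1 K) (hPii : Pi i ≠ 0) (hqi : 0 < q i)
    (hj1 : 1 ≤ j) (hji : j < i) (hPij : Pi j ≠ 0)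
    (hh : h i (Pi i) < h j (Pi j)) :
    FeasibleP K N h Q ζ B1 Pi
      (fun k => if k = j then q j + q i else if k = i then 0 else q k)
      (fun k n => if k = i then p k n + ζ * (h j (Pi j) - h i (Pi i)) * q i / (N : ℝ)
        else p k n)
    ∧ RateP K N g Γσ Pi p <
      RateP K N g Γσ Pi
        (fun k n => if k = i then p k n + ζ * (h j (Pi j) - h i (Pi i)) * q i / (N : ℝ)
          else p k n) := by
  obtain ⟨hq0, hqz, hp0, hqsum, hcaus⟩ := hfeas
  obtain ⟨hi1, hiK⟩ := Finset.mem_Icc.mp hi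
  have hjK : j ≤ K := le_trans (le_of_lt hji) hiK
  have hjmem : j ∈ Finset.Icc 1 K := Finset.mem_Icc.mpr ⟨hj1, hjK⟩
  have hji' : j ≠ i := Nat.ne_of_lt hji
  have hij : i ≠ j := Ne.symm hji'
  have hNpos : (0:ℝ) < N := by exact_mod_cast (by omega : 0 < N)
  have hhi : 0 < h i (Pi i) :=
    (hpos i hi (Pi i) (Finset.mem_Icc.mpr ⟨Nat.one_le_iff_ne_zero.mpr hPii, hPiR i hi⟩)).1
  have hhj : 0 < h j (Pi j) :=
    (hpos j hjmem (Pi j) (Finset.mem_Icc.mpr ⟨Nat.one_le_iff_ne_zero.mpr hPij, hPiR j hjmem⟩)).1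
  set δ : ℝ := ζ * (h j (Pi j) - h i (Pi i)) * q i / (N : ℝ) with hδdef
  have hδ : 0 < δ := by
    apply div_pos _ hNpos
    exact mul_pos (mul_pos hζ (by linarith)) hqi
  have hcard : (NI N Pi i).card = N := by
    rw [NI, Finset.card_sdiff_of_subset]
    · simp [Nat.card_Icc]
    · simp only [Finset.singleton_subset_iff, Finset.mem_Icc]
      exact ⟨Nat.zero_le _, hPiR i hi⟩
  have hNδ : (N : ℝ) * δ = ζ * (h j (Pi j) - h i (Pi i)) * q i := by
    rw [hδdef]; field_simp
  have hinner : ∑ n ∈ NI N Pi i, (p i n + δ)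
      = (∑ n ∈ NI N Pi i, p i n) + ζ * (h j (Pi j) - h i (Pi i)) * q i := by
    rw [Finset.sum_add_distrib, Finset.sum_const, hcard, nsmul_eq_mul, hNδ]
  have hhq : ∀ k ∈ Finset.Icc 1 K, 0 ≤ h k (Pi k) := by
    intro k hk
    by_cases hk0 : Pi k = 0
    · rw [hk0, (hzero k).1]
    · exact (hpos k hk (Pi k)
        (Finset.mem_Icc.mpr ⟨Nat.one_le_iff_ne_zero.mpr hk0, hPiR k hk⟩)).1.le
  refine ⟨⟨?_, ?_, ?_, ?_, ?_⟩, ?_⟩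
  · -- q̂ nonneg
    intro k hk
    show 0 ≤ if k = j then q j + q i else if k = i then 0 else q k
    split_ifs with h1 h2
    · subst h1; exact add_nonneg (hq0 k hk) (hq0 i hi)
    · exact le_refl 0
    · exact hq0 k hk
  · -- Π k = 0 → q̂ k = 0
    intro k hk hk0
    show (if k = j then q j + q i else if k = i then 0 else q k) = 0
    split_ifs with h1 h2
    · subst h1; exact absurd hk0 hPij
    · rfl
    · exact hqz k hk hk0
  · -- p̂ nonneg
    intro k hk n hn
    show 0 ≤ if k = i then p k n + δ else p k n
    split_ifs with h1
    · subst h1; exact add_nonneg (hp0 k hk n hn) hδ.le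
    · exact hp0 k hk n hn
  · -- average power
    rw [sum_upd2 (f' := fun k => if k = j then q j + q i else if k = i then 0 else q k)
      hjmem hi hji'
      (f := q) (fun k _ hkj hki => by simp [hkj, hki])]
    simp [hij]
    linarith [hqsum]
  · -- energy causality
    intro m hm
    obtain ⟨hm1, hmK⟩ := Finset.mem_Icc.mp hm
    by_cases hmi : m < i
    · have hL : ∑ k ∈ Finset.Icc 1 m, ∑ n ∈ NI N Pi k,
          (if k = i then p k n + δ else p k n)
          = ∑ k ∈ Finset.Icc 1 m, ∑ n ∈ NI N Pi k, p k n := by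
        refine Finset.sum_congr rfl fun k hk => ?_
        have hki : k ≠ i := by
          have := (Finset.mem_Icc.mp hk).2; omega
        simp [hki]
      rw [hL]
      refine le_trans (hcaus m hm) ?_
      have hR : ∑ k ∈ Finset.Icc 1 (m-1), h k (Pi k) * q k
          ≤ ∑ k ∈ Finset.Icc 1 (m-1), h k (Pi k) *
            (if k = j then q j + q i else if k = i then 0 else q k) := by
        refine Finset.sum_le_sum fun k hk => ?_
        have hki : k ≠ i := by
          have := (Finset.mem_Icc.mp hk).2; omega
        split_ifs with h1
        · subst h1; nlinarith [hqi, hhj]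
        · exact le_refl _
      linarith [mul_le_mul_of_nonneg_left hR hζ.le]
    · push_neg at hmi
      have himem : i ∈ Finset.Icc 1 m := Finset.mem_Icc.mpr ⟨hi1, hmi⟩
      have hL : ∑ k ∈ Finset.Icc 1 m, ∑ n ∈ NI N Pi k,
          (if k = i then p k n + δ else p k n)
          = (∑ k ∈ Finset.Icc 1 m, ∑ n ∈ NI N Pi k, p k n)
            + ζ * (h j (Pi j) - h i (Pi i)) * q i := by
        rw [sum_upd (f' := fun k => ∑ n ∈ NI N Pi k,
            (if k = i then p k n + δ else p k n))
          himem (f := fun k => ∑ n ∈ NI N Pi k, p k n)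
          (fun k _ hki => by simp [hki])]
        have e : ∑ n ∈ NI N Pi i,
            ((fun k n => if k = i then p k n + δ else p k n) i n)
            = ∑ n ∈ NI N Pi i, (p i n + δ) :=
          Finset.sum_congr rfl fun n _ => by simp
        rw [e, hinner]; ring
      rw [hL]
      have hjm : j ∈ Finset.Icc 1 (m-1) := Finset.mem_Icc.mpr ⟨hj1, by omega⟩
      have hkey : ∑ k ∈ Finset.Icc 1 (m-1), h k (Pi k) * q k
            + (h j (Pi j) - h i (Pi i)) * q i
          ≤ ∑ k ∈ Finset.Icc 1 (m-1), h k (Pi k) *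
            (if k = j then q j + q i else if k = i then 0 else q k) := by
        by_cases him : i ≤ m - 1
        · have himm : i ∈ Finset.Icc 1 (m-1) := Finset.mem_Icc.mpr ⟨hi1, him⟩
          rw [sum_upd2 (f' := fun k => h k (Pi k) *
              (if k = j then q j + q i else if k = i then 0 else q k))
            hjm himm hji'
            (f := fun k => h k (Pi k) * q k) (fun k _ hkj hki => by simp [hkj, hki])]
          have ej : h j (Pi j) * (if j = j then q j + q i else if j = i then 0 else q j)
              = h j (Pi j) * (q j + q i) := by rw [if_pos rfl]
          have ei : h i (Pi i) * (if i = j then q j + q i else if i = i then 0 else q i)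
              = 0 := by rw [if_neg hij, if_pos rfl, mul_zero]
          rw [ej, ei]
          ring_nf
          linarith [mul_nonneg hhi.le hqi.le]
        · rw [sum_upd (f' := fun k => h k (Pi k) *
              (if k = j then q j + q i else if k = i then 0 else q k))
            hjm (f := fun k => h k (Pi k) * q k)
            (fun k hk hkj => by
              have hki : k ≠ i := by
                have := (Finset.mem_Icc.mp hk).2; omega
              simp [hkj, hki])]
          have ej : h j (Pi j) * (if j = j then q j + q i else if j = i then 0 else q j)
              = h j (Pi j) * (q j + q i) := by rw [if_pos rfl]
          rw [ej]
          ring_nf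
          linarith [mul_nonneg hhi.le hqi.le]
      have h1 := hcaus m hm
      have h2 := mul_le_mul_of_nonneg_left hkey hζ.le
      rw [mul_add] at h2
      linarith [h2]
  · -- rate strictly increases
    unfold RateP
    have hK0 : (0:ℝ) < K := by exact_mod_cast (by omega : 0 < K)
    have hKN : (0:ℝ) < 1 / ((K : ℝ) * N) := by positivity
    refine mul_lt_mul_of_pos_left ?_ hKN
    have hterm : ∀ n ∈ NI N Pi i,
        Real.logb 2 (1 + g i n * p i n / Γσ)
          ≤ Real.logb 2 (1 + g i n * (p i n + δ) / Γσ) := by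
      intro n hn
      have hgn : 0 ≤ g i n := by
        obtain ⟨hn1, _⟩ := Finset.mem_sdiff.mp hn
        rcases Nat.eq_zero_or_pos n with h0 | h0
        · rw [h0, (hzero i).2]
        · exact (hpos i hi n (Finset.mem_Icc.mpr
            ⟨h0, (Finset.mem_Icc.mp hn1).2⟩)).2.le
      have hpn : 0 ≤ p i n := hp0 i hi n hn
      have hx : (0:ℝ) < 1 + g i n * p i n / Γσ := by positivity
      refine Real.logb_le_logb_of_le (by norm_num) hx ?_
      have : g i n * p i n ≤ g i n * (p i n + δ) := by nlinarith
      gcongr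
    have hn0 : ∃ n₀ ∈ NI N Pi i, 1 ≤ n₀ := by
      by_cases h1 : Pi i = 1
      · exact ⟨2, Finset.mem_sdiff.mpr ⟨Finset.mem_Icc.mpr ⟨Nat.zero_le _, hN⟩,
          by simp [h1]⟩, by omega⟩
      · exact ⟨1, Finset.mem_sdiff.mpr ⟨Finset.mem_Icc.mpr ⟨Nat.zero_le _, by omega⟩,
          by simp [Ne.symm h1]⟩, by omega⟩
    obtain ⟨n₀, hn₀, hn₀1⟩ := hn0
    have hstrict : ∑ n ∈ NI N Pi i, Real.logb 2 (1 + g i n * p i n / Γσ)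
        < ∑ n ∈ NI N Pi i, Real.logb 2 (1 + g i n * (p i n + δ) / Γσ) := by
      refine Finset.sum_lt_sum hterm ⟨n₀, hn₀, ?_⟩
      have hgn : 0 < g i n₀ := by
        obtain ⟨hn1, _⟩ := Finset.mem_sdiff.mp hn₀
        exact (hpos i hi n₀ (Finset.mem_Icc.mpr ⟨hn₀1, (Finset.mem_Icc.mp hn1).2⟩)).2
      have hpn : 0 ≤ p i n₀ := hp0 i hi n₀ hn₀
      have hx : (0:ℝ) < 1 + g i n₀ * p i n₀ / Γσ := by positivity
      refine Real.logb_lt_logb (by norm_num) hx ?_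
      have hlt : g i n₀ * p i n₀ < g i n₀ * (p i n₀ + δ) := by nlinarith
      gcongr
    refine Finset.sum_lt_sum (fun k hk => ?_) ⟨i, hi, ?_⟩
    · by_cases hki : k = i
      · rw [hki]
        have e : ∑ n ∈ NI N Pi i,
            Real.logb 2 (1 + g i n * ((fun k n => if k = i then p k n + δ else p k n) i n) / Γσ)
            = ∑ n ∈ NI N Pi i, Real.logb 2 (1 + g i n * (p i n + δ) / Γσ) :=
          Finset.sum_congr rfl fun n _ => by simp
        rw [e]
        exact hstrict.le
      · have e : ∑ n ∈ NI N Pi k,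
            Real.logb 2 (1 + g k n * ((fun k n => if k = i then p k n + δ else p k n) k n) / Γσ)
            = ∑ n ∈ NI N Pi k, Real.logb 2 (1 + g k n * p k n / Γσ) :=
          Finset.sum_congr rfl fun n _ => by simp [hki]
        rw [e]
    · have e : ∑ n ∈ NI N Pi i,
          Real.logb 2 (1 + g i n * ((fun k n => if k = i then p k n + δ else p k n) i n) / Γσ)
          = ∑ n ∈ NI N Pi i, Real.logb 2 (1 + g i n * (p i n + δ) / Γσ) :=
        Finset.sum_congr rfl fun n _ => by simp
      rw [e]
      exact hstrict
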